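/- Let h ∈ 𝒮(ℝⁿ) be a Schwartz function whose Fourier transform ĥ has compact support contained in ℝⁿ \ {0}, let φ: ℝⁿ \ {0} → ℝ be smooth and positively homogeneous of degree 1, and let ν ∈ S^{n-1}. Define κ := sup{ |(∇φ(ξ/|ξ|) − ∇φ(ν)) · ξ| : ξ ∈ supp(ĥ) }. Then for all x ∈ ℝⁿ and t ∈ ℝ with κ|t| ≤ 1, one has |e^{itφ(D)}h(x) − h(x + t∇φ(ν))| ≤ ‖ĥ‖_{L¹(ℝⁿ)} · κ · |t|, where e^{itφ(D)}h(x) = (2π)^{-n} ∫ e^{ix·ξ} e^{itφ(ξ)} ĥ(ξ) dξ. -/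

import Mathlib

open scoped RealInnerProductSpace FourierTransform
open Real MeasureTheory

section Aux
variable {n : ℕ}
local notation "E" => EuclideanSpace ℝ (Fin n)

lemma norm_exp_I_sub_one_le (θ : ℝ) : ‖Complex.exp (Complex.I * θ) - 1‖ ≤ |θ| := by
  have h2 : ‖Complex.exp (Complex.I * θ) - 1‖ ^ 2 = 2 - 2 * Real.cos θ := by
    rw [mul_comm, Complex.exp_mul_I, Complex.sq_norm, Complex.normSq_apply]
    simp [Complex.sub_re, Complex.sub_im, Complex.add_re, Complex.add_im, Complex.mul_re,
      Complex.mul_im, Complex.cos_ofReal_re, Complex.sin_ofReal_re, Complex.cos_ofReal_im,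
      Complex.sin_ofReal_im]
    have := Real.sin_sq_add_cos_sq θ
    nlinarith
  have h4 : 2 - 2 * Real.cos θ ≤ θ ^ 2 := by
    have := Real.one_sub_sq_div_two_le_cos (x := θ); nlinarith
  nlinarith [norm_nonneg (Complex.exp (Complex.I * θ) - 1), abs_nonneg θ, sq_abs θ]


lemma diffAt_of_hom {φ : E → ℝ} (hφ : ContDiffOn ℝ (⊤ : ℕ∞) φ {ξ : E | ξ ≠ 0})
    {ξ : E} (hξ : ξ ≠ 0) : DifferentiableAt ℝ φ ξ :=
  ((hφ.differentiableOn (by simp)).differentiableAt (isOpen_ne.mem_nhds hξ))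

lemma fderiv_hom {φ : E → ℝ} (hφ : ContDiffOn ℝ (⊤ : ℕ∞) φ {ξ : E | ξ ≠ 0})
    (hhom : ∀ l : ℝ, 0 < l → ∀ ξ : E, ξ ≠ 0 → φ (l • ξ) = l * φ ξ)
    {ξ : E} (hξ : ξ ≠ 0) {c : ℝ} (hc : 0 < c) :
    fderiv ℝ φ (c • ξ) = fderiv ℝ φ ξ := by
  have hcξ : c • ξ ≠ 0 := smul_ne_zero hc.ne' hξ
  have hd1 : DifferentiableAt ℝ φ (c • ξ) := diffAt_of_hom hφ hcξ
  have hd2 : DifferentiableAt ℝ φ ξ := diffAt_of_hom hφ hξ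
  -- F := fun η => φ (c • η) has fderiv c • (fderiv φ (c•ξ)) at ξ
  have h1 : HasFDerivAt (fun η : E => φ (c • η))
      (c • fderiv ℝ φ (c • ξ)) ξ := by
    have := hd1.hasFDerivAt.comp ξ ((c • ContinuousLinearMap.id ℝ E).hasFDerivAt (x := ξ))
    simpa [Function.comp_def] using this.congr_fderiv (by ext v; simp [mul_comm])
  -- F agrees with fun η => c * φ η near ξ
  have heq : (fun η : E => φ (c • η)) =ᶠ[nhds ξ] fun η => c * φ η := by
    filter_upwards [isOpen_ne.mem_nhds hξ] with η hη
    exact hhom c hc η hη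
  have h2 : HasFDerivAt (fun η : E => φ (c • η)) (c • fderiv ℝ φ ξ) ξ := by
    have : HasFDerivAt (fun η : E => c * φ η) (c • fderiv ℝ φ ξ) ξ :=
      hd2.hasFDerivAt.const_mul c
    exact this.congr_of_eventuallyEq heq
  have := h1.unique h2
  have hc' : c ≠ 0 := hc.ne'
  ext v
  have := congrArg (fun L : E →L[ℝ] ℝ => L v) this
  simp only [ContinuousLinearMap.smul_apply, smul_eq_mul] at this
  exact mul_left_cancel₀ hc' this

lemma euler_id {φ : E → ℝ} (hφ : ContDiffOn ℝ (⊤ : ℕ∞) φ {ξ : E | ξ ≠ 0})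
    (hhom : ∀ l : ℝ, 0 < l → ∀ ξ : E, ξ ≠ 0 → φ (l • ξ) = l * φ ξ)
    {ξ : E} (hξ : ξ ≠ 0) : fderiv ℝ φ ξ ξ = φ ξ := by
  have hd : DifferentiableAt ℝ φ ξ := diffAt_of_hom hφ hξ
  have h1 : HasDerivAt (fun l : ℝ => φ (l • ξ)) (fderiv ℝ φ ξ ξ) 1 := by
    have hs : HasDerivAt (fun l : ℝ => l • ξ) ξ 1 := by
      simpa using (hasDerivAt_id (1:ℝ)).smul_const ξ
    have hd1 : HasFDerivAt φ (fderiv ℝ φ ξ) ((1:ℝ) • ξ) := by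
      rw [one_smul]; exact hd.hasFDerivAt
    simpa [Function.comp_def] using hd1.comp_hasDerivAt 1 hs
  have heq : (fun l : ℝ => φ (l • ξ)) =ᶠ[nhds 1] fun l => l * φ ξ := by
    filter_upwards [isOpen_Ioi.mem_nhds (by norm_num : (0:ℝ) < 1)] with l hl
    exact hhom l hl ξ hξ
  have h2 : HasDerivAt (fun l : ℝ => φ (l • ξ)) (φ ξ) 1 := by
    have : HasDerivAt (fun l : ℝ => l * φ ξ) (φ ξ) 1 := by
      simpa using (hasDerivAt_id (1:ℝ)).mul_const (φ ξ)
    exact this.congr_of_eventuallyEq heq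
  exact h1.unique h2

lemma euler_grad {φ : E → ℝ} (hφ : ContDiffOn ℝ (⊤ : ℕ∞) φ {ξ : E | ξ ≠ 0})
    (hhom : ∀ l : ℝ, 0 < l → ∀ ξ : E, ξ ≠ 0 → φ (l • ξ) = l * φ ξ)
    {ξ : E} (hξ : ξ ≠ 0) : φ ξ = ⟪gradient φ (‖ξ‖⁻¹ • ξ), ξ⟫ := by
  have hn : (0:ℝ) < ‖ξ‖⁻¹ := inv_pos.2 (norm_pos_iff.2 hξ)
  rw [gradient, fderiv_hom hφ hhom hξ hn, InnerProductSpace.toDual_symm_apply]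
  exact (euler_id hφ hhom hξ).symm


lemma hhat_eq_fourier (h : SchwartzMap (EuclideanSpace ℝ (Fin n)) ℂ)
    (hhat : E → ℂ)
    (hhat_def : ∀ ξ, hhat ξ = ∫ x, Complex.exp (-(Complex.I * ((⟪x, ξ⟫ : ℝ) : ℂ))) * h x) :
    hhat = fun ξ => 𝓕 ⇑h ((2 * π)⁻¹ • ξ) := by
  ext ξ
  rw [hhat_def, Real.fourier_eq']
  congr 1
  ext v
  rw [smul_eq_mul]
  have h1 : ⟪v, (2 * π)⁻¹ • ξ⟫ = (2 * π)⁻¹ * ⟪v, ξ⟫ := real_inner_smul_right v ξ _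
  have hπ : (2 * π) ≠ 0 := by positivity
  have h2 : -2 * π * ⟪v, (2 * π)⁻¹ • ξ⟫ = -⟪v, ξ⟫ := by
    rw [h1]; field_simp
  rw [h2]
  congr 1
  push_cast [Complex.ofReal_neg]
  ring

lemma inversion (h : SchwartzMap (EuclideanSpace ℝ (Fin n)) ℂ)
    (hhat : E → ℂ)
    (hhat_def : ∀ ξ, hhat ξ = ∫ x, Complex.exp (-(Complex.I * ((⟪x, ξ⟫ : ℝ) : ℂ))) * h x)
    (y : E) :
    (((2 * π) ^ n : ℝ)⁻¹ • ∫ ξ, Complex.exp (Complex.I * ((⟪y, ξ⟫ : ℝ) : ℂ)) * hhat ξ)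
      = h y := by
  have hhe := hhat_eq_fourier h hhat hhat_def
  have hπ : (0:ℝ) < 2 * π := by positivity
  have key : (fun ξ : E => Complex.exp (Complex.I * ((⟪y, ξ⟫ : ℝ) : ℂ)) * hhat ξ)
      = fun ξ => (fun w : E => Complex.exp (((2 * π * ⟪y, w⟫ : ℝ) : ℂ) * Complex.I) • 𝓕 ⇑h w)
          ((2 * π)⁻¹ • ξ) := by
    ext ξ
    rw [hhe]
    simp only [smul_eq_mul]
    have h1 : ⟪y, (2 * π)⁻¹ • ξ⟫ = (2 * π)⁻¹ * ⟪y, ξ⟫ := real_inner_smul_right y ξ _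
    have h2 : 2 * π * ⟪y, (2 * π)⁻¹ • ξ⟫ = ⟪y, ξ⟫ := by rw [h1]; field_simp
    rw [h2, mul_comm Complex.I]
  rw [key]
  have hcv := MeasureTheory.Measure.integral_comp_inv_smul_of_nonneg
    (volume : Measure (EuclideanSpace ℝ (Fin n)))
    (fun w : EuclideanSpace ℝ (Fin n) =>
      Complex.exp (((2 * π * ⟪y, w⟫ : ℝ) : ℂ) * Complex.I) • 𝓕 ⇑h w) hπ.le
  rw [hcv, finrank_euclideanSpace_fin, smul_smul,
    inv_mul_cancel₀ (by positivity : ((2 * π) ^ n : ℝ) ≠ 0), one_smul]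
  have hint : (∫ w : E, Complex.exp (((2 * π * ⟪y, w⟫ : ℝ) : ℂ) * Complex.I) • 𝓕 ⇑h w)
      = 𝓕⁻ (𝓕 ⇑h) y := by
    rw [Real.fourierInv_eq']
    congr 1; ext v
    rw [real_inner_comm]
  rw [hint]
  have hf' : Integrable (𝓕 ⇑h) volume := by
    have : 𝓕 ⇑h = ⇑(SchwartzMap.fourierTransformCLM ℂ h) := by
      rw [SchwartzMap.fourierTransformCLM_apply]; rfl
    rw [this]
    exact (SchwartzMap.fourierTransformCLM ℂ h).integrable
  exact MeasureTheory.Integrable.fourierInv_fourier_eq h.integrable hf' h.continuous.continuousAt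


/-- Translation lemma: for a Schwartz function `h` whose Fourier transform `ĥ` has compact
support away from the origin, a smooth positively 1-homogeneous `φ`, and `ν ∈ S^{n-1}`,
with `κ = sup { |(∇φ(ξ̂) - ∇φ(ν)) · ξ| : ξ ∈ supp ĥ }`, one has
`|e^{itφ(D)}h(x) - h(x + t∇φ(ν))| ≤ ‖ĥ‖_{L¹} κ |t|` whenever `κ|t| ≤ 1`. -/
theorem translation_lemma
    (n : ℕ) (h : SchwartzMap (EuclideanSpace ℝ (Fin n)) ℂ)
    (φ : EuclideanSpace ℝ (Fin n) → ℝ)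
    (hφ : ContDiffOn ℝ (⊤ : ℕ∞) φ {ξ : EuclideanSpace ℝ (Fin n) | ξ ≠ 0})
    (hhom : ∀ l : ℝ, 0 < l → ∀ ξ : EuclideanSpace ℝ (Fin n), ξ ≠ 0 →
      φ (l • ξ) = l * φ ξ)
    (ν : EuclideanSpace ℝ (Fin n)) (hν : ‖ν‖ = 1)
    (hhat : EuclideanSpace ℝ (Fin n) → ℂ)
    (hhat_def : ∀ ξ, hhat ξ = ∫ x, Complex.exp (-(Complex.I * ((⟪x, ξ⟫ : ℝ) : ℂ))) * h x)
    (hsupp_cpt : IsCompact (tsupport hhat))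
    (hsupp_zero : (0 : EuclideanSpace ℝ (Fin n)) ∉ tsupport hhat)
    (κ : ℝ)
    (hκ : κ = sSup {r : ℝ | ∃ ξ ∈ tsupport hhat,
      r = |⟪gradient φ (‖ξ‖⁻¹ • ξ) - gradient φ ν, ξ⟫|})
    (x : EuclideanSpace ℝ (Fin n)) (t : ℝ) (ht : κ * |t| ≤ 1) :
    ‖(((2 * π) ^ n : ℝ)⁻¹ •
        ∫ ξ, Complex.exp (Complex.I * (((⟪x, ξ⟫ + t * φ ξ : ℝ)) : ℂ)) * hhat ξ)
      - h (x + t • gradient φ ν)‖ ≤ (∫ ξ, ‖hhat ξ‖) * κ * |t| := by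
  classical
  set g : EuclideanSpace ℝ (Fin n) := gradient φ ν with hg
  set K : Set (EuclideanSpace ℝ (Fin n)) := tsupport hhat with hK
  set F₁ : EuclideanSpace ℝ (Fin n) → ℂ :=
    fun ξ => Complex.exp (Complex.I * (((⟪x, ξ⟫ + t * φ ξ : ℝ)) : ℂ)) * hhat ξ with hF₁
  set F₂ : EuclideanSpace ℝ (Fin n) → ℂ :=
    fun ξ => Complex.exp (Complex.I * ((⟪x + t • g, ξ⟫ : ℝ) : ℂ)) * hhat ξ with hF₂
  -- continuity of hhat
  have hhat_cont : Continuous hhat := by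
    rw [hhat_eq_fourier h hhat hhat_def]
    have : Continuous (𝓕 ⇑h) := by
      have e : 𝓕 ⇑h = ⇑(SchwartzMap.fourierTransformCLM ℂ h) := by
        rw [SchwartzMap.fourierTransformCLM_apply]; rfl
      rw [e]
      exact (SchwartzMap.fourierTransformCLM ℂ h).continuous
    exact this.comp (continuous_const_smul _)
  have hhat_int : Integrable hhat := hhat_cont.integrable_of_hasCompactSupport hsupp_cpt
  -- continuity of F₂
  have hF₂_cont : Continuous F₂ := by
    apply Continuous.mul _ hhat_cont
    exact Complex.continuous_exp.comp (continuous_const.mul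
      (Complex.continuous_ofReal.comp (continuous_const.inner continuous_id)))
  -- continuity of F₁
  have hF₁_cont : Continuous F₁ := by
    rw [continuous_iff_continuousAt]
    intro ξ
    by_cases hξK : ξ ∈ K
    · have hξ0 : ξ ≠ 0 := fun e => hsupp_zero (e ▸ hξK)
      have hco : ContinuousOn F₁ {ξ : EuclideanSpace ℝ (Fin n) | ξ ≠ 0} := by
        apply ContinuousOn.mul _ hhat_cont.continuousOn
        apply Continuous.comp_continuousOn Complex.continuous_exp
        apply ContinuousOn.mul continuousOn_const
        apply Continuous.comp_continuousOn Complex.continuous_ofReal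
        exact ((continuous_const.inner continuous_id).continuousOn).add
          (continuousOn_const.mul ((hφ.continuousOn)))
      exact hco.continuousAt (isOpen_ne.mem_nhds hξ0)
    · have h0 : F₁ =ᶠ[nhds ξ] (fun _ => (0:ℂ)) := by
        filter_upwards [(isClosed_tsupport hhat).isOpen_compl.mem_nhds hξK] with η hη
        simp [hF₁, image_eq_zero_of_notMem_tsupport hη]
      exact ContinuousAt.congr (continuousAt_const (y := (0:ℂ)))
        (Filter.EventuallyEq.symm h0)
  have hF₁_supp : HasCompactSupport F₁ := by
    apply HasCompactSupport.mul_left (hf := hsupp_cpt)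
  have hF₂_supp : HasCompactSupport F₂ := by
    apply HasCompactSupport.mul_left (hf := hsupp_cpt)
  have hF₁_int : Integrable F₁ := hF₁_cont.integrable_of_hasCompactSupport hF₁_supp
  have hF₂_int : Integrable F₂ := hF₂_cont.integrable_of_hasCompactSupport hF₂_supp
  -- the sup bound
  set f : EuclideanSpace ℝ (Fin n) → ℝ :=
    fun ξ => |⟪gradient φ (‖ξ‖⁻¹ • ξ) - g, ξ⟫| with hf
  have hSimg : {r : ℝ | ∃ ξ ∈ tsupport hhat,
      r = |⟪gradient φ (‖ξ‖⁻¹ • ξ) - gradient φ ν, ξ⟫|} = f '' K := by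
    ext r; constructor
    · rintro ⟨ξ, hξ, rfl⟩; exact ⟨ξ, hξ, rfl⟩
    · rintro ⟨ξ, hξ, rfl⟩; exact ⟨ξ, hξ, rfl⟩
  have hf_cont : ContinuousOn f K := by
    have hU : IsOpen {ξ : EuclideanSpace ℝ (Fin n) | ξ ≠ 0} := isOpen_ne
    have hfd : ContinuousOn (fderiv ℝ φ) {ξ : EuclideanSpace ℝ (Fin n) | ξ ≠ 0} :=
      hφ.continuousOn_fderiv_of_isOpen hU (by simp)
    have hgradU : ContinuousOn (gradient φ) {ξ : EuclideanSpace ℝ (Fin n) | ξ ≠ 0} := by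
      have : gradient φ = fun ξ =>
          (InnerProductSpace.toDual ℝ (EuclideanSpace ℝ (Fin n))).symm (fderiv ℝ φ ξ) := rfl
      rw [this]
      exact (InnerProductSpace.toDual ℝ
        (EuclideanSpace ℝ (Fin n))).symm.continuous.comp_continuousOn hfd
    have hsc : ContinuousOn (fun ξ : EuclideanSpace ℝ (Fin n) => ‖ξ‖⁻¹ • ξ)
        {ξ : EuclideanSpace ℝ (Fin n) | ξ ≠ 0} := by
      apply ContinuousOn.fun_smul _ continuousOn_id
      exact (continuous_norm.continuousOn).inv₀ (fun ξ hξ => norm_ne_zero_iff.2 hξ)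
    have hKU : K ⊆ {ξ : EuclideanSpace ℝ (Fin n) | ξ ≠ 0} := by
      intro ξ hξ e
      exact hsupp_zero (e ▸ hξ)
    have hmaps : ∀ ξ ∈ ({ξ : EuclideanSpace ℝ (Fin n) | ξ ≠ 0} : Set _),
        ‖ξ‖⁻¹ • ξ ∈ {ξ : EuclideanSpace ℝ (Fin n) | ξ ≠ 0} := by
      intro ξ hξ
      exact smul_ne_zero (inv_ne_zero (norm_ne_zero_iff.2 hξ)) hξ
    have hgc : ContinuousOn (fun ξ : EuclideanSpace ℝ (Fin n) => gradient φ (‖ξ‖⁻¹ • ξ))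
        {ξ : EuclideanSpace ℝ (Fin n) | ξ ≠ 0} :=
      hgradU.comp hsc hmaps
    have : ContinuousOn f {ξ : EuclideanSpace ℝ (Fin n) | ξ ≠ 0} := by
      apply continuous_abs.comp_continuousOn
      exact (hgc.sub continuousOn_const).inner continuousOn_id
    exact this.mono hKU
  have hbdd : BddAbove (f '' K) := (hsupp_cpt.image_of_continuousOn hf_cont).bddAbove
  have hκ_le : ∀ ξ ∈ K, f ξ ≤ κ := by
    intro ξ hξ
    rw [hκ, hSimg]
    exact le_csSup hbdd ⟨ξ, hξ, rfl⟩
  have hκ0 : 0 ≤ κ := by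
    rcases K.eq_empty_or_nonempty with hKe | ⟨ξ₀, hξ₀⟩
    · rw [hκ, hSimg, hKe]
      simp [Real.sSup_empty]
    · exact le_trans (abs_nonneg _) (hκ_le ξ₀ hξ₀)
  -- pointwise bound
  have hpt : ∀ ξ, ‖F₁ ξ - F₂ ξ‖ ≤ κ * |t| * ‖hhat ξ‖ := by
    intro ξ
    by_cases hξK : ξ ∈ K
    · have hξ0 : ξ ≠ 0 := fun e => hsupp_zero (e ▸ hξK)
      set a : ℝ := ⟪x + t • g, ξ⟫ with ha
      set θ : ℝ := t * (φ ξ - ⟪g, ξ⟫) with hθ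
      have hab : ⟪x, ξ⟫ + t * φ ξ = a + θ := by
        rw [ha, hθ, inner_add_left, real_inner_smul_left]; ring
      have hfac : F₁ ξ - F₂ ξ =
          Complex.exp (Complex.I * (a : ℂ)) * (Complex.exp (Complex.I * (θ : ℂ)) - 1) * hhat ξ := by
        rw [hF₁, hF₂]
        simp only [hab]
        push_cast
        rw [mul_add, Complex.exp_add]
        ring
      rw [hfac]
      rw [norm_mul, norm_mul]
      have h1 : ‖Complex.exp (Complex.I * (a : ℂ))‖ = 1 := by
        rw [mul_comm]; exact Complex.norm_exp_ofReal_mul_I a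
      have h2 : ‖Complex.exp (Complex.I * (θ : ℂ)) - 1‖ ≤ |θ| := norm_exp_I_sub_one_le θ
      have h3 : |θ| ≤ κ * |t| := by
        rw [hθ, abs_mul]
        have : |φ ξ - ⟪g, ξ⟫| = f ξ := by
          rw [hf]
          congr 1
          rw [inner_sub_left]
          congr 1
          exact euler_grad hφ hhom hξ0
        rw [this, mul_comm]
        exact mul_le_mul_of_nonneg_right (hκ_le ξ hξK) (abs_nonneg t)
      calc ‖Complex.exp (Complex.I * (a:ℂ))‖ * ‖Complex.exp (Complex.I * (θ:ℂ)) - 1‖ * ‖hhat ξ‖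
          = ‖Complex.exp (Complex.I * (θ:ℂ)) - 1‖ * ‖hhat ξ‖ := by rw [h1, one_mul]
        _ ≤ (κ * |t|) * ‖hhat ξ‖ :=
            mul_le_mul_of_nonneg_right (h2.trans h3) (norm_nonneg _)
    · have hz : hhat ξ = 0 := image_eq_zero_of_notMem_tsupport hξK
      simp [hF₁, hF₂, hz]
  -- main estimate
  have hinv := inversion h hhat hhat_def (x + t • g)
  rw [← hinv]
  have hc0 : (0:ℝ) ≤ ((2 * π) ^ n : ℝ)⁻¹ := by positivity
  have hc1 : ((2 * π) ^ n : ℝ)⁻¹ ≤ 1 := by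
    rw [inv_le_one₀ (by positivity)]
    exact one_le_pow₀ (by nlinarith [Real.pi_gt_three])
  have hsub : (((2 * π) ^ n : ℝ)⁻¹ • ∫ ξ, F₁ ξ) - (((2 * π) ^ n : ℝ)⁻¹ • ∫ ξ, F₂ ξ)
      = ((2 * π) ^ n : ℝ)⁻¹ • ∫ ξ, (F₁ ξ - F₂ ξ) := by
    rw [integral_sub hF₁_int hF₂_int, smul_sub]
  rw [hsub]
  rw [norm_smul, Real.norm_eq_abs, abs_of_nonneg hc0]
  have hstep : ‖∫ ξ, (F₁ ξ - F₂ ξ)‖ ≤ κ * |t| * ∫ ξ, ‖hhat ξ‖ := by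
    calc ‖∫ ξ, (F₁ ξ - F₂ ξ)‖ ≤ ∫ ξ, ‖F₁ ξ - F₂ ξ‖ := norm_integral_le_integral_norm _
      _ ≤ ∫ ξ, κ * |t| * ‖hhat ξ‖ := by
          apply integral_mono ((hF₁_int.sub hF₂_int).norm) (hhat_int.norm.const_mul _) hpt
      _ = κ * |t| * ∫ ξ, ‖hhat ξ‖ := by rw [integral_const_mul]
  have hfin : ((2 * π) ^ n : ℝ)⁻¹ * ‖∫ ξ, (F₁ ξ - F₂ ξ)‖ ≤ κ * |t| * ∫ ξ, ‖hhat ξ‖ := by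
    have h4 : ((2 * π) ^ n : ℝ)⁻¹ * ‖∫ ξ, (F₁ ξ - F₂ ξ)‖ ≤ 1 * (κ * |t| * ∫ ξ, ‖hhat ξ‖) := by
      apply mul_le_mul hc1 hstep (norm_nonneg _)
      norm_num
    linarith
  calc ((2 * π) ^ n : ℝ)⁻¹ * ‖∫ ξ, (F₁ ξ - F₂ ξ)‖ ≤ κ * |t| * ∫ ξ, ‖hhat ξ‖ := hfin
    _ = (∫ ξ, ‖hhat ξ‖) * κ * |t| := by ring
end Aux
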